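/- Let γ ∈ ℝ and let k₁,…,k₅ be integers such that (k₁+k₂)·(k₃+k₄)·(k₁+k₂+k₃+k₅)·(k₁+k₂+k₄+k₅)·(k₁+k₃+k₄+k₅)·(k₂+k₃+k₄+k₅) ≠ 0. Then Φ₀^{(3)}(k₁,k₂,k₃+k₄+k₅) ≠ 0, Φ₀^{(3)}(k₃,k₄,k₁+k₂+k₅) ≠ 0, and q₂^{(5)}(k₁,…,k₅) = −(2/5)·i·γ² · ( Σ_{l=1}^{7} p_l(k₁,k₂,k₃,k₄)·k₅^{7−l} ) / ( (k₁+k₂)(k₃+k₄)(k₁+k₂+k₃+k₅)(k₁+k₂+k₄+k₅)(k₁+k₃+k₄+k₅)(k₂+k₃+k₄+k₅) ), where the polynomials p₁,…,p₇ are the explicit polynomials given in the context. -/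

import Mathlib

/-- `Φ₀^{(3)}` in factored form. -/
noncomputable def Phi0_3 (x y z : ℤ) : ℂ :=
  -(5 / 2) * Complex.I * ((x + y : ℤ) : ℂ) * ((y + z : ℤ) : ℂ) * ((x + z : ℤ) : ℂ) *
    (((x + y : ℤ) : ℂ) ^ 2 + ((y + z : ℤ) : ℂ) ^ 2 + ((x + z : ℤ) : ℂ) ^ 2)

/-- The cubic multiplier `Q₁^{(3)}`. -/
noncomputable def Q1_3 (γ : ℝ) (x y z : ℤ) : ℂ :=
  -(Complex.I / 3) * (γ : ℂ) * ((x + y + z : ℤ) : ℂ) *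
    (((x + y : ℤ) : ℂ) ^ 2 + ((y + z : ℤ) : ℂ) ^ 2 + ((x + z : ℤ) : ℂ) ^ 2)

/-- The quintic multiplier `q₂^{(5)}`. -/
noncomputable def q2_5 (γ : ℝ) (k₁ k₂ k₃ k₄ k₅ : ℤ) : ℂ :=
  (9 / 2) * (Q1_3 γ k₁ k₂ (k₃ + k₄ + k₅) / Phi0_3 k₁ k₂ (k₃ + k₄ + k₅) * Q1_3 γ k₃ k₄ k₅ +
    Q1_3 γ k₃ k₄ (k₁ + k₂ + k₅) / Phi0_3 k₃ k₄ (k₁ + k₂ + k₅) * Q1_3 γ k₁ k₂ k₅)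

/-- `Σ_{l=1}^{7} p_l(k₁,k₂,k₃,k₄) k₅^{7-l}` with the explicit polynomials `p₁,…,p₇`. -/
def psum (k₁ k₂ k₃ k₄ k₅ : ℤ) : ℤ :=
  let σ := k₁ + k₂ + k₃ + k₄
  let a := k₁ + k₂
  let b := k₃ + k₄
  let P := k₁ * k₂
  let Q := k₃ * k₄
  σ * k₅ ^ 6 + (4 * σ ^ 2 - 2 * a * b) * k₅ ^ 5 + (7 * σ ^ 3 - 8 * a * b * σ) * k₅ ^ 4 +
    (7 * σ ^ 4 - 12 * a * b * σ ^ 2 - 2 * a ^ 2 * b ^ 2 - 2 * (P * a + Q * b) * σ +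
      2 * (P * a ^ 2 + Q * b ^ 2)) * k₅ ^ 3 +
    (4 * σ ^ 5 - 7 * a * b * σ ^ 3 - 7 * a ^ 2 * b ^ 2 * σ - 3 * (P * a + Q * b) * σ ^ 2 +
      (P * a ^ 2 + Q * b ^ 2) * σ + 3 * (P * a ^ 3 + Q * b ^ 3) -
      (P ^ 2 * a + Q ^ 2 * b)) * k₅ ^ 2 +
    (σ ^ 6 - 8 * a ^ 2 * b ^ 2 * σ ^ 2 - (P * a + Q * b) * σ ^ 3 -
      2 * (P * a ^ 2 + Q * b ^ 2) * σ ^ 2 + 4 * (P * a ^ 3 + Q * b ^ 3) * σ -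
      (P ^ 2 * a + Q ^ 2 * b) * σ + (P * a ^ 4 + Q * b ^ 4) -
      (P ^ 2 * a ^ 2 + Q ^ 2 * b ^ 2)) * k₅ +
    (a * b * σ ^ 5 - 3 * a ^ 2 * b ^ 2 * σ ^ 3 - (P * a ^ 2 + Q * b ^ 2) * σ ^ 3 +
      (P * a ^ 3 + Q * b ^ 3) * σ ^ 2 + (P * a ^ 4 + Q * b ^ 4) * σ -
      (P ^ 2 * a ^ 2 + Q ^ 2 * b ^ 2) * σ)


lemma Phi0_3_ne (x y z : ℤ) (hxy : x + y ≠ 0) (hyz : y + z ≠ 0) (hxz : x + z ≠ 0) :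
    Phi0_3 x y z ≠ 0 := by
  unfold Phi0_3
  have hs : (x + y) ^ 2 + (y + z) ^ 2 + (x + z) ^ 2 ≠ 0 := by positivity
  have hsq : (((x + y : ℤ) : ℂ) ^ 2 + ((y + z : ℤ) : ℂ) ^ 2 + ((x + z : ℤ) : ℂ) ^ 2) ≠ 0 := by
    exact_mod_cast hs
  have h52 : (-(5 / 2) * Complex.I : ℂ) ≠ 0 := by
    simp [Complex.I_ne_zero]
  exact mul_ne_zero (mul_ne_zero (mul_ne_zero (mul_ne_zero h52
    (Int.cast_ne_zero.mpr hxy)) (Int.cast_ne_zero.mpr hyz)) (Int.cast_ne_zero.mpr hxz)) hsq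

lemma ratio_eq (γ : ℝ) (x y z : ℤ) (hxy : x + y ≠ 0) (hyz : y + z ≠ 0) (hxz : x + z ≠ 0) :
    Q1_3 γ x y z / Phi0_3 x y z =
      (2 / 15) * (γ : ℂ) * ((x + y + z : ℤ) : ℂ) /
        (((x + y : ℤ) : ℂ) * ((y + z : ℤ) : ℂ) * ((x + z : ℤ) : ℂ)) := by
  have hs : (x + y) ^ 2 + (y + z) ^ 2 + (x + z) ^ 2 ≠ 0 := by positivity
  have hsq : (((x + y : ℤ) : ℂ) ^ 2 + ((y + z : ℤ) : ℂ) ^ 2 + ((x + z : ℤ) : ℂ) ^ 2) ≠ 0 := by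
    exact_mod_cast hs
  have cxy : ((x + y : ℤ) : ℂ) ≠ 0 := Int.cast_ne_zero.mpr hxy
  have cyz : ((y + z : ℤ) : ℂ) ≠ 0 := Int.cast_ne_zero.mpr hyz
  have cxz : ((x + z : ℤ) : ℂ) ≠ 0 := Int.cast_ne_zero.mpr hxz
  unfold Q1_3 Phi0_3
  rw [div_eq_div_iff (by exact Phi0_3_ne x y z hxy hyz hxz) (by
    exact mul_ne_zero (mul_ne_zero cxy cyz) cxz)]
  ring

lemma key_id (k₁ k₂ k₃ k₄ k₅ : ℤ) :
    (k₁ + k₂ + k₃ + k₄ + k₅) * (k₃ + k₄ + k₅) *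
        ((k₃ + k₄) ^ 2 + (k₄ + k₅) ^ 2 + (k₃ + k₅) ^ 2) *
        ((k₃ + k₄) * (k₁ + k₂ + k₄ + k₅) * (k₁ + k₂ + k₃ + k₅)) +
      (k₁ + k₂ + k₃ + k₄ + k₅) * (k₁ + k₂ + k₅) *
        ((k₁ + k₂) ^ 2 + (k₂ + k₅) ^ 2 + (k₁ + k₅) ^ 2) *
        ((k₁ + k₂) * (k₂ + k₃ + k₄ + k₅) * (k₁ + k₃ + k₄ + k₅)) =
      2 * psum k₁ k₂ k₃ k₄ k₅ := by
  unfold psum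
  ring

set_option maxHeartbeats 10000000 in
theorem stmt14 (γ : ℝ) (k₁ k₂ k₃ k₄ k₅ : ℤ)
    (h : (k₁ + k₂) * (k₃ + k₄) * (k₁ + k₂ + k₃ + k₅) * (k₁ + k₂ + k₄ + k₅) *
      (k₁ + k₃ + k₄ + k₅) * (k₂ + k₃ + k₄ + k₅) ≠ 0) :
    Phi0_3 k₁ k₂ (k₃ + k₄ + k₅) ≠ 0 ∧ Phi0_3 k₃ k₄ (k₁ + k₂ + k₅) ≠ 0 ∧
    q2_5 γ k₁ k₂ k₃ k₄ k₅ =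
      -(2 / 5) * Complex.I * (γ : ℂ) ^ 2 * ((psum k₁ k₂ k₃ k₄ k₅ : ℤ) : ℂ) /
        (((k₁ + k₂) * (k₃ + k₄) * (k₁ + k₂ + k₃ + k₅) * (k₁ + k₂ + k₄ + k₅) *
          (k₁ + k₃ + k₄ + k₅) * (k₂ + k₃ + k₄ + k₅) : ℤ) : ℂ) := by
  have h12 : k₁ + k₂ ≠ 0 := by rintro e; apply h; rw [e]; ring
  have h34 : k₃ + k₄ ≠ 0 := by
    rintro e; apply h
    rw [show (k₁+k₂)*(k₃+k₄)*(k₁+k₂+k₃+k₅)*(k₁+k₂+k₄+k₅)*(k₁+k₃+k₄+k₅)*(k₂+k₃+k₄+k₅)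
      = (k₃+k₄)*((k₁+k₂)*(k₁+k₂+k₃+k₅)*(k₁+k₂+k₄+k₅)*(k₁+k₃+k₄+k₅)*(k₂+k₃+k₄+k₅)) from by ring, e]
    ring
  have h1235 : k₁ + k₂ + k₃ + k₅ ≠ 0 := by
    rintro e; apply h
    rw [show (k₁+k₂)*(k₃+k₄)*(k₁+k₂+k₃+k₅)*(k₁+k₂+k₄+k₅)*(k₁+k₃+k₄+k₅)*(k₂+k₃+k₄+k₅)
      = (k₁+k₂+k₃+k₅)*((k₁+k₂)*(k₃+k₄)*(k₁+k₂+k₄+k₅)*(k₁+k₃+k₄+k₅)*(k₂+k₃+k₄+k₅)) from by ring, e]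
    ring
  have h1245 : k₁ + k₂ + k₄ + k₅ ≠ 0 := by
    rintro e; apply h
    rw [show (k₁+k₂)*(k₃+k₄)*(k₁+k₂+k₃+k₅)*(k₁+k₂+k₄+k₅)*(k₁+k₃+k₄+k₅)*(k₂+k₃+k₄+k₅)
      = (k₁+k₂+k₄+k₅)*((k₁+k₂)*(k₃+k₄)*(k₁+k₂+k₃+k₅)*(k₁+k₃+k₄+k₅)*(k₂+k₃+k₄+k₅)) from by ring, e]
    ring
  have h1345 : k₁ + k₃ + k₄ + k₅ ≠ 0 := by
    rintro e; apply h
    rw [show (k₁+k₂)*(k₃+k₄)*(k₁+k₂+k₃+k₅)*(k₁+k₂+k₄+k₅)*(k₁+k₃+k₄+k₅)*(k₂+k₃+k₄+k₅)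
      = (k₁+k₃+k₄+k₅)*((k₁+k₂)*(k₃+k₄)*(k₁+k₂+k₃+k₅)*(k₁+k₂+k₄+k₅)*(k₂+k₃+k₄+k₅)) from by ring, e]
    ring
  have h2345 : k₂ + k₃ + k₄ + k₅ ≠ 0 := by
    rintro e; apply h
    rw [show (k₁+k₂)*(k₃+k₄)*(k₁+k₂+k₃+k₅)*(k₁+k₂+k₄+k₅)*(k₁+k₃+k₄+k₅)*(k₂+k₃+k₄+k₅)
      = (k₂+k₃+k₄+k₅)*((k₁+k₂)*(k₃+k₄)*(k₁+k₂+k₃+k₅)*(k₁+k₂+k₄+k₅)*(k₁+k₃+k₄+k₅)) from by ring, e]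
    ring
  have hP1 : Phi0_3 k₁ k₂ (k₃ + k₄ + k₅) ≠ 0 :=
    Phi0_3_ne _ _ _ h12 (by omega) (by omega)
  have hP2 : Phi0_3 k₃ k₄ (k₁ + k₂ + k₅) ≠ 0 :=
    Phi0_3_ne _ _ _ h34 (by omega) (by omega)
  refine ⟨hP1, hP2, ?_⟩
  have c12 : ((k₁ + k₂ : ℤ) : ℂ) ≠ 0 := Int.cast_ne_zero.mpr h12
  have c34 : ((k₃ + k₄ : ℤ) : ℂ) ≠ 0 := Int.cast_ne_zero.mpr h34
  have c1235 : ((k₁ + k₂ + k₃ + k₅ : ℤ) : ℂ) ≠ 0 := Int.cast_ne_zero.mpr h1235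
  have c1245 : ((k₁ + k₂ + k₄ + k₅ : ℤ) : ℂ) ≠ 0 := Int.cast_ne_zero.mpr h1245
  have c1345 : ((k₁ + k₃ + k₄ + k₅ : ℤ) : ℂ) ≠ 0 := Int.cast_ne_zero.mpr h1345
  have c2345 : ((k₂ + k₃ + k₄ + k₅ : ℤ) : ℂ) ≠ 0 := Int.cast_ne_zero.mpr h2345
  have r1 := ratio_eq γ k₁ k₂ (k₃ + k₄ + k₅) h12 (by omega) (by omega)
  have r2 := ratio_eq γ k₃ k₄ (k₁ + k₂ + k₅) h34 (by omega) (by omega)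
  have key := key_id k₁ k₂ k₃ k₄ k₅
  have keyC := congrArg (fun n : ℤ => (n : ℂ)) key
  unfold q2_5
  rw [r1, r2]
  unfold Q1_3
  have d12 : ((k₁:ℂ) + k₂) ≠ 0 := by exact_mod_cast h12
  have d34 : ((k₃:ℂ) + k₄) ≠ 0 := by exact_mod_cast h34
  have d1235 : ((k₁:ℂ) + k₂ + k₃ + k₅) ≠ 0 := by exact_mod_cast h1235
  have d1245 : ((k₁:ℂ) + k₂ + k₄ + k₅) ≠ 0 := by exact_mod_cast h1245
  have d1345 : ((k₁:ℂ) + k₃ + k₄ + k₅) ≠ 0 := by exact_mod_cast h1345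
  have d2345 : ((k₂:ℂ) + k₃ + k₄ + k₅) ≠ 0 := by exact_mod_cast h2345
  have e2345 : ((k₂:ℂ) + ((k₃:ℂ) + (k₄:ℂ) + (k₅:ℂ))) ≠ 0 := by
    exact_mod_cast (by omega : k₂ + (k₃ + k₄ + k₅) ≠ 0)
  have e1345 : ((k₁:ℂ) + ((k₃:ℂ) + (k₄:ℂ) + (k₅:ℂ))) ≠ 0 := by
    exact_mod_cast (by omega : k₁ + (k₃ + k₄ + k₅) ≠ 0)
  have e1245 : ((k₄:ℂ) + ((k₁:ℂ) + (k₂:ℂ) + (k₅:ℂ))) ≠ 0 := by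
    exact_mod_cast (by omega : k₄ + (k₁ + k₂ + k₅) ≠ 0)
  have e1235 : ((k₃:ℂ) + ((k₁:ℂ) + (k₂:ℂ) + (k₅:ℂ))) ≠ 0 := by
    exact_mod_cast (by omega : k₃ + (k₁ + k₂ + k₅) ≠ 0)
  push_cast at keyC ⊢
  have hd1 : ((k₁:ℂ) + k₂) * ((k₂:ℂ) + ((k₃:ℂ) + (k₄:ℂ) + (k₅:ℂ))) *
      ((k₁:ℂ) + ((k₃:ℂ) + (k₄:ℂ) + (k₅:ℂ))) ≠ 0 :=
    mul_ne_zero (mul_ne_zero (by exact_mod_cast h12) e2345) e1345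
  have hd2 : ((k₃:ℂ) + k₄) * ((k₄:ℂ) + ((k₁:ℂ) + (k₂:ℂ) + (k₅:ℂ))) *
      ((k₃:ℂ) + ((k₁:ℂ) + (k₂:ℂ) + (k₅:ℂ))) ≠ 0 :=
    mul_ne_zero (mul_ne_zero (by exact_mod_cast h34) e1245) e1235
  have hd3 := mul_ne_zero hd1 hd2
  have hd4 : ((k₁:ℂ) + k₂) * ((k₃:ℂ) + k₄) * ((k₁:ℂ) + (k₂:ℂ) + (k₃:ℂ) + k₅) *
      ((k₁:ℂ) + (k₂:ℂ) + (k₄:ℂ) + k₅) * ((k₁:ℂ) + (k₃:ℂ) + (k₄:ℂ) + k₅) *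
      ((k₂:ℂ) + (k₃:ℂ) + (k₄:ℂ) + k₅) ≠ 0 := by
    refine mul_ne_zero (mul_ne_zero (mul_ne_zero (mul_ne_zero (mul_ne_zero ?_ ?_) ?_) ?_) ?_) ?_
    · exact_mod_cast h12
    · exact_mod_cast h34
    · exact_mod_cast h1235
    · exact_mod_cast h1245
    · exact_mod_cast h1345
    · exact_mod_cast h2345
  rw [div_mul_eq_mul_div (2 / 15 * (γ:ℂ) * ((k₁:ℂ) + (k₂:ℂ) + ((k₃:ℂ) + (k₄:ℂ) + (k₅:ℂ))))
      (((k₁:ℂ) + (k₂:ℂ)) * ((k₂:ℂ) + ((k₃:ℂ) + (k₄:ℂ) + (k₅:ℂ))) * ((k₁:ℂ) + ((k₃:ℂ) + (k₄:ℂ) + (k₅:ℂ))))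
      (-(Complex.I / 3) * (γ:ℂ) * ((k₃:ℂ) + (k₄:ℂ) + (k₅:ℂ)) *
        (((k₃:ℂ) + (k₄:ℂ)) ^ 2 + ((k₄:ℂ) + (k₅:ℂ)) ^ 2 + ((k₃:ℂ) + (k₅:ℂ)) ^ 2)),
    div_mul_eq_mul_div (2 / 15 * (γ:ℂ) * ((k₃:ℂ) + (k₄:ℂ) + ((k₁:ℂ) + (k₂:ℂ) + (k₅:ℂ))))
      (((k₃:ℂ) + (k₄:ℂ)) * ((k₄:ℂ) + ((k₁:ℂ) + (k₂:ℂ) + (k₅:ℂ))) * ((k₃:ℂ) + ((k₁:ℂ) + (k₂:ℂ) + (k₅:ℂ))))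
      (-(Complex.I / 3) * (γ:ℂ) * ((k₁:ℂ) + (k₂:ℂ) + (k₅:ℂ)) *
        (((k₁:ℂ) + (k₂:ℂ)) ^ 2 + ((k₂:ℂ) + (k₅:ℂ)) ^ 2 + ((k₁:ℂ) + (k₅:ℂ)) ^ 2))]
  rw [div_add_div _ _ hd1 hd2, mul_div_assoc',
    show ((k₁:ℂ) + (k₂:ℂ)) * ((k₃:ℂ) + (k₄:ℂ)) * ((k₁:ℂ) + (k₂:ℂ) + (k₃:ℂ) + (k₅:ℂ)) * ((k₁:ℂ) + (k₂:ℂ) + (k₄:ℂ) + (k₅:ℂ)) *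
        ((k₁:ℂ) + (k₃:ℂ) + (k₄:ℂ) + (k₅:ℂ)) * ((k₂:ℂ) + (k₃:ℂ) + (k₄:ℂ) + (k₅:ℂ)) =
      (((k₁:ℂ) + (k₂:ℂ)) * ((k₂:ℂ) + ((k₃:ℂ) + (k₄:ℂ) + (k₅:ℂ))) * ((k₁:ℂ) + ((k₃:ℂ) + (k₄:ℂ) + (k₅:ℂ)))) *
      (((k₃:ℂ) + (k₄:ℂ)) * ((k₄:ℂ) + ((k₁:ℂ) + (k₂:ℂ) + (k₅:ℂ))) * ((k₃:ℂ) + ((k₁:ℂ) + (k₂:ℂ) + (k₅:ℂ))))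
      from by ring]
  congr 1
  linear_combination (-(1 / 5) * Complex.I * (γ:ℂ) ^ 2) * keyC
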